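/- For a hull K (a bounded subset of the upper half-plane ℍ whose complement in ℍ is open and simply connected), let g_K : ℍ∖K → ℍ be the unique conformal homeomorphism with hydrodynamic normalization g_K(z) = z + 2A(K)/z + O(|z|⁻²) at infinity. Then A(K) ≥ 0. -/

import Mathlib

open Complex Set

/-- The open upper half-plane. -/
def UHP : Set ℂ := {z : ℂ | 0 < z.im}

/-- A hull: a bounded subset of the upper half-plane whose complement in the
half-plane is open and simply connected. -/
def IsHull (K : Set ℂ) : Prop :=
  K ⊆ UHP ∧ Bornology.IsBounded K ∧ IsOpen (UHP \ K) ∧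
    SimplyConnectedSpace (UHP \ K : Set ℂ)

/-- `g` is a conformal homeomorphism from `D` onto the upper half-plane with
hydrodynamic normalization `g(z) = z + 2A/z + O(|z|⁻²)` at infinity. -/
def IsHydroNormalized (g : ℂ → ℂ) (D : Set ℂ) (A : ℝ) : Prop :=
  DifferentiableOn ℂ g D ∧ Set.BijOn g D UHP ∧
    ∃ C R : ℝ, ∀ z ∈ D, R ≤ ‖z‖ →
      ‖g z - z - 2 * (A : ℂ) / z‖ ≤ C / ‖z‖ ^ 2

set_option maxHeartbeats 2000000 in
/-- The coefficient `A(K)` of a hull is nonnegative. -/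
theorem hull_coefficient_nonneg (K : Set ℂ) (g : ℂ → ℂ) (A : ℝ)
    (hK : IsHull K) (hg : IsHydroNormalized g (UHP \ K) A) : 0 ≤ A := by
  obtain ⟨hKU, hKb, hDo, hDs⟩ := hK
  obtain ⟨hdiff, hbij, C, R, hfar⟩ := hg
  set D : Set ℂ := UHP \ K with hDdef
  have hUo : IsOpen UHP := isOpen_lt continuous_const Complex.continuous_im
  -- bound on K
  obtain ⟨M0, hM0⟩ := hKb.subset_closedBall 0
  set M : ℝ := max M0 0 with hMdef
  have hMnn : 0 ≤ M := le_max_right _ _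
  have hKM : ∀ k ∈ K, ‖k‖ ≤ M := by
    intro k hk
    have := hM0 hk
    rw [Metric.mem_closedBall, Complex.dist_eq, sub_zero] at this
    exact this.trans (le_max_left _ _)
  have hmemD : ∀ z : ℂ, 0 < z.im → M < ‖z‖ → z ∈ D := by
    intro z h1 h2
    exact ⟨h1, fun hk => absurd (hKM z hk) (by linarith)⟩
  have hvert : ∀ u : ℝ, M < u → (((u : ℝ) : ℂ) * I ∈ D ∧ ‖((u : ℝ) : ℂ) * I‖ = u) := by
    intro u hu
    have hu0 : 0 < u := lt_of_le_of_lt hMnn hu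
    have habs : ‖((u : ℝ) : ℂ) * I‖ = u := by
      rw [norm_mul, Complex.norm_I, Complex.norm_real, Real.norm_eq_abs, mul_one, abs_of_pos hu0]
    refine ⟨hmemD _ ?_ ?_, habs⟩
    · simpa using hu0
    · rw [habs]; exact hu
  -- far-field bound
  set c : ℝ := 2 * |A| + |C| + 1 with hcdef
  have hc1 : 1 ≤ c := by
    have := abs_nonneg A
    have := abs_nonneg C
    simp only [hcdef]
    linarith
  have hgz : ∀ z ∈ D, max R 1 ≤ ‖z‖ →
      ‖g z - z‖ ≤ c / ‖z‖ := by
    intro z hz hR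
    have ha1 : 1 ≤ ‖z‖ := le_trans (le_max_right _ _) hR
    have ha0 : 0 < ‖z‖ := lt_of_lt_of_le one_pos ha1
    have h := hfar z hz (le_trans (le_max_left _ _) hR)
    have h2 : ‖2 * (A : ℂ) / z‖ = 2 * |A| / ‖z‖ := by
      rw [norm_div, norm_mul]
      simp [Complex.norm_real]
    have h3 : ‖g z - z‖ ≤ C / ‖z‖ ^ 2 + 2 * |A| / ‖z‖ := by
      calc ‖g z - z‖ = ‖(g z - z - 2 * (A : ℂ) / z) + 2 * (A : ℂ) / z‖ := by
            ring_nf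
        _ ≤ ‖g z - z - 2 * (A : ℂ) / z‖ + ‖2 * (A : ℂ) / z‖ :=
            norm_add_le _ _
        _ ≤ C / ‖z‖ ^ 2 + 2 * |A| / ‖z‖ := by rw [h2]; linarith
    have h4 : C / ‖z‖ ^ 2 ≤ |C| / ‖z‖ := by
      apply div_le_div₀ (abs_nonneg C) (le_abs_self C) ha0
      nlinarith
    have h5 : c / ‖z‖ = 2 * |A| / ‖z‖ + |C| / ‖z‖
        + 1 / ‖z‖ := by
      rw [hcdef]; ring
    have h6 : 0 ≤ 1 / ‖z‖ := by positivity
    linarith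
  -- Main step: Im (g z) ≤ Im z on D.
  have humle : ∀ z ∈ D, (g z).im ≤ z.im := by
    by_contra hcon
    push_neg at hcon
    obtain ⟨z₀, hz₀D, hz₀⟩ := hcon
    set u₀ : ℝ := (g z₀).im - z₀.im with hu₀def
    have hu₀ : 0 < u₀ := by simp only [hu₀def]; linarith
    set R₀ : ℝ := max (max (max R 1) (max (M + 1) c)) (max (2 * c / u₀) (‖z₀‖))
      with hR₀def
    have hR₀R1 : max R 1 ≤ R₀ := le_trans (le_max_left _ _) (le_max_left _ _)
    have hR₀1 : 1 ≤ R₀ := le_trans (le_max_right _ _) hR₀R1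
    have hR₀0 : 0 < R₀ := lt_of_lt_of_le one_pos hR₀1
    have hR₀M : M + 1 ≤ R₀ := le_trans (le_trans (le_max_left _ _) (le_max_right _ _))
      (le_max_left _ _)
    have hR₀c : c ≤ R₀ := le_trans (le_trans (le_max_right _ _) (le_max_right _ _))
      (le_max_left _ _)
    have hR₀u : 2 * c / u₀ ≤ R₀ := le_trans (le_max_left _ _) (le_max_right _ _)
    have hR₀z₀ : ‖z₀‖ ≤ R₀ := le_trans (le_max_right _ _) (le_max_right _ _)
    -- far estimates
    have hfar3 : ∀ z ∈ D, R₀ ≤ ‖z‖ → ‖g z - z‖ ≤ 1 := by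
      intro z hz hR
      have ha0 : 0 < ‖z‖ := lt_of_lt_of_le hR₀0 hR
      have h1 := hgz z hz (le_trans hR₀R1 hR)
      have : c / ‖z‖ ≤ 1 := by
        rw [div_le_one ha0]; linarith
      linarith
    have hfar2 : ∀ z ∈ D, R₀ ≤ ‖z‖ → (g z).im - z.im ≤ u₀ / 2 := by
      intro z hz hR
      have ha0 : 0 < ‖z‖ := lt_of_lt_of_le hR₀0 hR
      have h1 := hgz z hz (le_trans hR₀R1 hR)
      have h2 : (g z).im - z.im ≤ ‖g z - z‖ := by
        have := Complex.im_le_norm (g z - z)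
        rwa [Complex.sub_im] at this
      have h3 : c / ‖z‖ ≤ u₀ / 2 := by
        rw [div_le_div_iff₀ ha0 (by norm_num : (0:ℝ) < 2)]
        have h4 : 2 * c ≤ u₀ * R₀ := by
          have := (div_le_iff₀ hu₀).mp hR₀u
          nlinarith
        nlinarith
      linarith
    -- topology of D
    haveI := hDs
    have hDpc : IsPreconnected D :=
      (isPathConnected_iff_pathConnectedSpace.mpr inferInstance).isConnected.isPreconnected
    have hinj := hbij.injOn
    have hmapsto := hbij.mapsTo
    have hopen : ∀ s ⊆ D, IsOpen s → IsOpen (g '' s) := by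
      have han : AnalyticOnNhd ℂ g D := hdiff.analyticOnNhd hDo
      rcases han.is_constant_or_isOpen hDpc with ⟨w, hw⟩ | h
      · exfalso
        have ha : ((M + 1 : ℝ) : ℂ) * I ∈ D := (hvert (M + 1) (by linarith)).1
        have hb : ((M + 2 : ℝ) : ℂ) * I ∈ D := (hvert (M + 2) (by linarith)).1
        have : ((M + 1 : ℝ) : ℂ) * I = ((M + 2 : ℝ) : ℂ) * I :=
          hinj ha hb (by rw [hw _ ha, hw _ hb])
        have := congrArg Complex.im this
        simp at this
      · exact h
    set f : ℂ → ℂ := Function.invFunOn g D with hfdef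
    have hInv : Set.InvOn f g D UHP := hbij.invOn_invFunOn
    have hfmaps : MapsTo f UHP D := hbij.surjOn.mapsTo_invFunOn
    have hfcont : ContinuousOn f UHP := by
      rw [continuousOn_open_iff hUo]
      intro t ht
      have himg : UHP ∩ f ⁻¹' t = g '' (D ∩ t) := by
        ext w
        constructor
        · rintro ⟨hw1, hw2⟩
          exact ⟨f w, ⟨hfmaps hw1, hw2⟩, hInv.2 hw1⟩
        · rintro ⟨z, ⟨hzD, hzt⟩, rfl⟩
          refine ⟨hmapsto hzD, ?_⟩
          rw [mem_preimage, hInv.1 hzD]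
          exact hzt
      rw [himg]
      exact hopen _ inter_subset_left (hDo.inter ht)
    -- key bound via connectedness
    have key : ∀ (φ : ℂ →ₗ[ℝ] ℝ), (∀ w, |φ w| ≤ ‖w‖) →
        (∀ m : ℝ, R₀ + 1 ≤ m → ∃ p ∈ D, R₀ ≤ ‖p‖ ∧ m + 2 ≤ φ p) →
        ∀ z ∈ D, ‖z‖ ≤ R₀ → φ (g z) ≤ R₀ + 3 := by
      intro φ hφ hwit z hzD hzR
      by_contra hgt
      push_neg at hgt
      set m : ℝ := φ (g z) - 1 with hmdef
      have hmR : R₀ + 2 ≤ m := by simp only [hmdef]; linarith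
      set U : Set ℂ := {w | 0 < w.im ∧ m < φ w} with hUdef
      have hUsub : U ⊆ UHP := fun w hw => hw.1
      have hUconv : Convex ℝ U := by
        have h1 : Convex ℝ {w : ℂ | 0 < w.im} := by
          have := convex_halfSpace_gt (Complex.imLm.isLinear) (0 : ℝ)
          simpa [Complex.imLm_coe] using this
        have h2 : Convex ℝ {w : ℂ | m < φ w} := convex_halfSpace_gt φ.isLinear m
        exact h1.inter h2
      have hVeq : f '' U = D ∩ g ⁻¹' U := by
        ext z'
        constructor
        · rintro ⟨w, hwU, rfl⟩
          refine ⟨hfmaps (hUsub hwU), ?_⟩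
          rw [mem_preimage, hInv.2 (hUsub hwU)]
          exact hwU
        · rintro ⟨hz'D, hz'U⟩
          exact ⟨g z', hz'U, hInv.1 hz'D⟩
      have hVpre : IsPreconnected (D ∩ g ⁻¹' U) := by
        rw [← hVeq]
        exact hUconv.isPreconnected.image f (hfcont.mono hUsub)
      set O₁ : Set ℂ := Metric.ball (0 : ℂ) (R₀ + 1) with hO₁def
      set O₂ : Set ℂ := {w : ℂ | m - 1 < φ w} with hO₂def
      have hO₁o : IsOpen O₁ := Metric.isOpen_ball
      have hO₂o : IsOpen O₂ := isOpen_lt continuous_const φ.continuous_of_finiteDimensional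
      have hsub : D ∩ g ⁻¹' U ⊆ O₁ ∪ O₂ := by
        rintro z' ⟨hz'D, hz'U⟩
        by_cases habs : ‖z'‖ < R₀ + 1
        · left
          rw [hO₁def, Metric.mem_ball, Complex.dist_eq, sub_zero]
          exact habs
        · right
          push_neg at habs
          have h1 := hfar3 z' hz'D (by linarith)
          have h2 : |φ (g z' - z')| ≤ 1 := le_trans (hφ _) h1
          have h3 : φ (g z' - z') = φ (g z') - φ z' := map_sub φ _ _
          have h4 : m < φ (g z') := hz'U.2
          have h5 : φ (g z') - φ z' ≤ 1 := by rw [← h3]; exact le_trans (le_abs_self _) h2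
          show m - 1 < φ z'
          linarith
      have hdisj : O₁ ∩ O₂ = ∅ := by
        ext w
        simp only [mem_inter_iff, mem_empty_iff_false, iff_false, not_and]
        intro hw1 hw2
        rw [hO₁def, Metric.mem_ball, Complex.dist_eq, sub_zero] at hw1
        have : φ w ≤ ‖w‖ := le_trans (le_abs_self _) (hφ w)
        have hw2' : m - 1 < φ w := hw2
        linarith
      have h1 : ((D ∩ g ⁻¹' U) ∩ O₁).Nonempty := by
        refine ⟨z, ⟨hzD, ?_⟩, ?_⟩
        · rw [mem_preimage]
          exact ⟨(hmapsto hzD : g z ∈ UHP), by simp only [hmdef]; linarith⟩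
        · rw [hO₁def, Metric.mem_ball, Complex.dist_eq, sub_zero]
          linarith
      have h2 : ((D ∩ g ⁻¹' U) ∩ O₂).Nonempty := by
        obtain ⟨p, hpD, hpR, hpφ⟩ := hwit m (by linarith)
        have hgp1 : ‖g p - p‖ ≤ 1 := hfar3 p hpD hpR
        have hgp2 : |φ (g p - p)| ≤ 1 := le_trans (hφ _) hgp1
        have hgp3 : φ (g p) - φ p = φ (g p - p) := (map_sub φ _ _).symm
        have hgp4 : m + 1 ≤ φ (g p) := by
          have := neg_le_of_abs_le hgp2
          rw [← hgp3] at this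
          linarith
        refine ⟨p, ⟨hpD, ?_⟩, ?_⟩
        · rw [mem_preimage]
          exact ⟨(hmapsto hpD : g p ∈ UHP), by linarith⟩
        · show m - 1 < φ p
          linarith
      obtain ⟨w, hw⟩ := hVpre O₁ O₂ hO₁o hO₂o hsub h1 h2
      rw [hdisj] at hw
      exact hw.2
    -- witnesses and consequences
    have hwitIm : ∀ m : ℝ, R₀ + 1 ≤ m → ∃ p ∈ D, R₀ ≤ ‖p‖ ∧
        m + 2 ≤ Complex.imLm p := by
      intro m hm
      obtain ⟨hp1, hp2⟩ := hvert (m + 2) (by linarith)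
      refine ⟨((m + 2 : ℝ) : ℂ) * I, hp1, by rw [hp2]; linarith, ?_⟩
      simp [Complex.imLm_coe]
    have hwitRe : ∀ m : ℝ, R₀ + 1 ≤ m → ∃ p ∈ D, R₀ ≤ ‖p‖ ∧
        m + 2 ≤ Complex.reLm p := by
      intro m hm
      refine ⟨((m + 2 : ℝ) : ℂ) + I, ?_, ?_, ?_⟩
      · apply hmemD
        · simp
        · have : (m + 2 : ℝ) ≤ ‖((m + 2 : ℝ) : ℂ) + I‖ := by
            have h := Complex.abs_re_le_norm (((m + 2 : ℝ) : ℂ) + I)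
            simp only [Complex.add_re, Complex.ofReal_re, Complex.I_re, add_zero] at h
            exact le_trans (le_abs_self _) h
          linarith
      · have : (m + 2 : ℝ) ≤ ‖((m + 2 : ℝ) : ℂ) + I‖ := by
          have h := Complex.abs_re_le_norm (((m + 2 : ℝ) : ℂ) + I)
          simp only [Complex.add_re, Complex.ofReal_re, Complex.I_re, add_zero] at h
          exact le_trans (le_abs_self _) h
        linarith
      · simp [Complex.reLm_coe]
    have hwitReNeg : ∀ m : ℝ, R₀ + 1 ≤ m → ∃ p ∈ D, R₀ ≤ ‖p‖ ∧
        m + 2 ≤ (-Complex.reLm) p := by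
      intro m hm
      refine ⟨-((m + 2 : ℝ) : ℂ) + I, ?_, ?_, ?_⟩
      · apply hmemD
        · simp
        · have : (m + 2 : ℝ) ≤ ‖-((m + 2 : ℝ) : ℂ) + I‖ := by
            have h := Complex.abs_re_le_norm (-((m + 2 : ℝ) : ℂ) + I)
            simp only [Complex.add_re, Complex.neg_re, Complex.ofReal_re, Complex.I_re,
              add_zero, abs_neg] at h
            exact le_trans (le_abs_self _) h
          linarith
      · have : (m + 2 : ℝ) ≤ ‖-((m + 2 : ℝ) : ℂ) + I‖ := by
          have h := Complex.abs_re_le_norm (-((m + 2 : ℝ) : ℂ) + I)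
          simp only [Complex.add_re, Complex.neg_re, Complex.ofReal_re, Complex.I_re,
            add_zero, abs_neg] at h
          exact le_trans (le_abs_self _) h
        linarith
      · simp [Complex.reLm_coe]
    have hbIm := key Complex.imLm (by simp [Complex.imLm_coe, Complex.abs_im_le_norm]) hwitIm
    have hbRe := key Complex.reLm (by simp [Complex.reLm_coe, Complex.abs_re_le_norm]) hwitRe
    have hbReNeg := key (-Complex.reLm)
      (by
        intro w
        simp only [LinearMap.neg_apply, abs_neg]
        simp [Complex.reLm_coe, Complex.abs_re_le_norm]) hwitReNeg
    have habsg : ∀ z ∈ D, ‖z‖ ≤ R₀ → ‖g z‖ ≤ 2 * R₀ + 6 := by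
      intro z hz hzR
      have h1 : (g z).im ≤ R₀ + 3 := by
        have := hbIm z hz hzR
        simpa [Complex.imLm_coe] using this
      have h2 : (g z).re ≤ R₀ + 3 := by
        have := hbRe z hz hzR
        simpa [Complex.reLm_coe] using this
      have h3 : -(R₀ + 3) ≤ (g z).re := by
        have := hbReNeg z hz hzR
        simp only [LinearMap.neg_apply] at this
        rw [Complex.reLm_coe] at this
        linarith
      have h4 : 0 < (g z).im := (hmapsto hz : g z ∈ UHP)
      have h5 := Complex.norm_le_abs_re_add_abs_im (g z)
      rw [abs_of_pos h4] at h5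
      have h6 : |(g z).re| ≤ R₀ + 3 := abs_le.mpr ⟨h3, h2⟩
      linarith
    -- the function F and its supremum on the bounded part
    set F : ℂ → ℂ := fun z => Complex.exp (I * (z - g z)) with hFdef
    have habsF : ∀ z, ‖F z‖ = Real.exp ((g z).im - z.im) := by
      intro z
      rw [hFdef]
      simp only [Complex.norm_exp]
      congr 1
      simp [Complex.mul_re, Complex.sub_im, Complex.sub_re]
    have hFdiff : DifferentiableOn ℂ F D :=
      ((differentiableOn_id.sub hdiff).const_mul I).cexp
    have hFcont : ContinuousOn F D := hFdiff.continuousOn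
    set T : Set ℂ := D ∩ Metric.closedBall (0 : ℂ) R₀ with hTdef
    have hz₀T : z₀ ∈ T := ⟨hz₀D, by
      rw [Metric.mem_closedBall, Complex.dist_eq, sub_zero]; exact hR₀z₀⟩
    have hTbdd : BddAbove ((fun z => ‖F z‖) '' T) := by
      refine ⟨Real.exp (2 * R₀ + 6), ?_⟩
      rintro x ⟨z, ⟨hzD, hzB⟩, rfl⟩
      show ‖F z‖ ≤ Real.exp (2 * R₀ + 6)
      rw [habsF]
      apply Real.exp_le_exp.mpr
      rw [Metric.mem_closedBall, Complex.dist_eq, sub_zero] at hzB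
      have h1 := habsg z hzD hzB
      have h2 : (g z).im ≤ ‖g z‖ := Complex.im_le_norm _
      have h3 : 0 < z.im := hzD.1
      linarith
    set S : ℝ := sSup ((fun z => ‖F z‖) '' T) with hSdef
    have hSge : Real.exp u₀ ≤ S := by
      apply le_csSup hTbdd
      refine ⟨z₀, hz₀T, ?_⟩
      show ‖F z₀‖ = Real.exp u₀
      rw [habsF, hu₀def]
    have hS1 : 1 < S := by
      have : (1:ℝ) < Real.exp u₀ := by
        rw [← Real.exp_zero]
        exact Real.exp_lt_exp.mpr hu₀
      linarith
    have hfarF : ∀ z ∈ D, R₀ ≤ ‖z‖ →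
        ‖F z‖ ≤ Real.exp (u₀ / 2) := by
      intro z hz hR
      rw [habsF]
      exact Real.exp_le_exp.mpr (hfar2 z hz hR)
    have hltS : Real.exp (u₀ / 2) < S :=
      lt_of_lt_of_le (Real.exp_lt_exp.mpr (by linarith)) hSge
    -- maximizing sequence
    obtain ⟨x, hxmono, hxlim, hxmem⟩ :=
      exists_seq_tendsto_sSup (⟨_, mem_image_of_mem _ hz₀T⟩ :
        ((fun z => ‖F z‖) '' T).Nonempty) hTbdd
    have hxmem' : ∀ n, ∃ z, z ∈ T ∧ ‖F z‖ = x n := fun n => (hxmem n)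
    choose zs hzsT hzsF using hxmem'
    have hzscb : ∀ n, zs n ∈ Metric.closedBall (0 : ℂ) R₀ := fun n => (hzsT n).2
    obtain ⟨ζ, hζcb, σ, hσ, hζlim⟩ :=
      (isCompact_closedBall (0 : ℂ) R₀).tendsto_subseq hzscb
    have hFseq : Filter.Tendsto (fun k => ‖F (zs (σ k))‖) Filter.atTop (nhds S) := by
      have heq : (fun k => ‖F (zs (σ k))‖) = x ∘ σ :=
        funext fun k => hzsF (σ k)
      rw [heq]
      exact hxlim.comp hσ.tendsto_atTop
    by_cases hζD : ζ ∈ D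
    · -- interior maximum: F is constant, contradiction with far decay
      have hcFζ : ContinuousAt F ζ := (hFcont ζ hζD).continuousAt (hDo.mem_nhds hζD)
      have hFζlim : Filter.Tendsto (fun k => ‖F (zs (σ k))‖) Filter.atTop
          (nhds (‖F ζ‖)) :=
        (continuous_norm.continuousAt.tendsto.comp (hcFζ.tendsto.comp hζlim))
      have hFζ : ‖F ζ‖ = S := tendsto_nhds_unique hFζlim hFseq
      have hmax : IsMaxOn (norm ∘ F) D ζ := by
        intro z hz
        show ‖F z‖ ≤ ‖F ζ‖
        rw [hFζ]
        by_cases h : ‖z‖ ≤ R₀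
        · exact le_csSup hTbdd ⟨z, ⟨hz, by
            rw [Metric.mem_closedBall, Complex.dist_eq, sub_zero]; exact h⟩, rfl⟩
        · push_neg at h
          exact le_trans (hfarF z hz h.le) hltS.le
      have heq := Complex.eqOn_of_isPreconnected_of_isMaxOn_norm hDpc hDo hFdiff hζD hmax
      obtain ⟨hqD, hqabs'⟩ := hvert (R₀ + M + 1) (by linarith)
      have hqabs : R₀ ≤ ‖((R₀ + M + 1 : ℝ) : ℂ) * I‖ := by
        rw [hqabs']; linarith
      have h1 := hfarF _ hqD hqabs
      have h2 := heq hqD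
      rw [Function.const_apply] at h2
      rw [h2, hFζ] at h1
      linarith
    · -- boundary point: contradiction
      have hζim : 0 ≤ ζ.im := by
        have h1 : Filter.Tendsto (fun k => (zs (σ k)).im) Filter.atTop (nhds ζ.im) :=
          (Complex.continuous_im.continuousAt.tendsto.comp hζlim)
        exact ge_of_tendsto' h1 fun k => le_of_lt (hzsT (σ k)).1.1
      have hwcb : ∀ k, g (zs (σ k)) ∈ Metric.closedBall (0 : ℂ) (2 * R₀ + 6) := by
        intro k
        rw [Metric.mem_closedBall, Complex.dist_eq, sub_zero]
        apply habsg _ (hzsT (σ k)).1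
        have := hzscb (σ k)
        rwa [Metric.mem_closedBall, Complex.dist_eq, sub_zero] at this
      obtain ⟨w, hwcb', τ, hτ, hwlim⟩ :=
        (isCompact_closedBall (0 : ℂ) (2 * R₀ + 6)).tendsto_subseq hwcb
      have hζlim2 : Filter.Tendsto (fun j => zs (σ (τ j))) Filter.atTop (nhds ζ) :=
        hζlim.comp hτ.tendsto_atTop
      by_cases hwU : 0 < w.im
      · have hfw : Filter.Tendsto (fun j => f (g (zs (σ (τ j))))) Filter.atTop (nhds (f w)) :=
          ((hfcont w hwU).continuousAt (hUo.mem_nhds hwU)).tendsto.comp hwlim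
        have hid : ∀ j, f (g (zs (σ (τ j)))) = zs (σ (τ j)) :=
          fun j => hInv.1 (hzsT _).1
        rw [funext hid] at hfw
        have : ζ = f w := tendsto_nhds_unique hζlim2 hfw
        exact hζD (this ▸ hfmaps hwU)
      · push_neg at hwU
        have h1 : Filter.Tendsto (fun j => (g (zs (σ (τ j)))).im - (zs (σ (τ j))).im)
            Filter.atTop (nhds (w.im - ζ.im)) :=
          (Complex.continuous_im.continuousAt.tendsto.comp hwlim).sub
            (Complex.continuous_im.continuousAt.tendsto.comp hζlim2)
        have h2 : Filter.Tendsto (fun j => ‖F (zs (σ (τ j)))‖) Filter.atTop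
            (nhds (Real.exp (w.im - ζ.im))) := by
          have := Real.continuous_exp.continuousAt.tendsto.comp h1
          simpa [habsF, Function.comp_def] using this
        have h3 : S = Real.exp (w.im - ζ.im) :=
          tendsto_nhds_unique (hFseq.comp hτ.tendsto_atTop) h2
        have h4 : Real.exp (w.im - ζ.im) ≤ 1 := by
          rw [← Real.exp_zero]
          exact Real.exp_le_exp.mpr (by linarith)
        linarith
  -- conclude A ≥ 0
  by_contra hA
  push_neg at hA
  set y : ℝ := max (max R 1) (max (M + 1) (|C| / (-(2 * A)) + 1)) with hydef
  have hy1 : 1 ≤ y := le_trans (le_max_right _ _) (le_max_left _ _)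
  have hy0 : 0 < y := lt_of_lt_of_le one_pos hy1
  have hyR : R ≤ y := le_trans (le_max_left _ _) (le_max_left _ _)
  have hyM : M + 1 ≤ y := le_trans (le_max_left _ _) (le_max_right _ _)
  have hyC : |C| / (-(2 * A)) + 1 ≤ y := le_trans (le_max_right _ _) (le_max_right _ _)
  set z : ℂ := ((y : ℝ) : ℂ) * I with hzdef
  have hzim : z.im = y := by simp [hzdef]
  have hzabs : ‖z‖ = y := (hvert y (by linarith)).2
  have hzD : z ∈ D := (hvert y (by linarith)).1
  have h1 := hfar z hzD (by rw [hzabs]; exact hyR)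
  rw [hzabs] at h1
  have h2 := humle z hzD
  rw [hzim] at h2
  have himq : (2 * (A : ℂ) / z).im = -(2 * A) / y := by
    rw [hzdef]
    have hy0' : (y : ℂ) ≠ 0 := by
      exact_mod_cast ne_of_gt hy0
    rw [div_eq_mul_inv, mul_inv, Complex.inv_I]
    simp [Complex.div_ofReal_im, Complex.mul_im, Complex.mul_re]
    field_simp
  have hexp : (g z - z - 2 * (A : ℂ) / z).im = (g z).im - y + 2 * A / y := by
    rw [Complex.sub_im, Complex.sub_im, hzim, himq]
    ring
  have hb0 : |(g z - z - 2 * (A : ℂ) / z).im| ≤ C / y ^ 2 :=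
    le_trans (Complex.abs_im_le_norm _) h1
  rw [hexp] at hb0
  have hb1 : -(C / y ^ 2) ≤ (g z).im - y + 2 * A / y := neg_le_of_abs_le hb0
  have hy2 : (0:ℝ) < y ^ 2 := by positivity
  have hb2 := mul_le_mul_of_nonneg_right hb1 (le_of_lt hy2)
  have e1 : -(C / y ^ 2) * y ^ 2 = -C := by field_simp
  have e2 : ((g z).im - y + 2 * A / y) * y ^ 2 = ((g z).im - y) * y ^ 2 + 2 * A * y := by
    field_simp
  rw [e1, e2] at hb2
  have h3 : ((g z).im - y) * y ^ 2 ≤ 0 :=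
    mul_nonpos_of_nonpos_of_nonneg (by linarith) (le_of_lt hy2)
  have h4 : -|C| ≤ 2 * A * y := by
    have h7 : C ≤ |C| := le_abs_self C
    linarith
  have hA2 : (0:ℝ) < -(2 * A) := by linarith
  have h5 := mul_le_mul_of_nonneg_right hyC (le_of_lt hA2)
  have h6 : (|C| / (-(2 * A)) + 1) * (-(2 * A)) = |C| + (-(2 * A)) := by
    rw [add_mul, div_mul_cancel₀ _ (ne_of_gt hA2), one_mul]
  rw [h6] at h5
  nlinarith
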